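/- arXiv:1802.01619 — 2 statements merged into one kernel-verified Lean document; each statement's English description precedes it below -/
import Mathlib

section
/- Let (a_n)_{n≥1} be a sequence of real numbers such that for all m, n ≥ 1, a_{m+n} ≥ a_m + a_n - ψ(m+n), where ψ(x) = 7·√(x·log(1+x)). If additionally a_n/n is bounded above, then the limit lim_{n→∞} a_n/n exists. -/
/-!
Splitting `k = ⌊k/2⌋ + ⌈k/2⌉` recursively gives `a (k m) ≥ k (a m - Φ m)`, where
`Φ m = ∑ⱼ ψ (2ʲ m) / 2ʲ` collects the error of the `⌈log₂ k⌉` levels of the splitting. For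
`ψ x = 7 √(x log (1 + x))` these terms decay geometrically, so `Φ m = O(ψ m) = o(m)`. Writing
`N = q m + s` then gives `liminf a_N / N ≥ a_m / m - o(1)` as `m → ∞`, hence `limsup ≤ liminf`.
-/

open Filter Topology Finset Real

/-- The hypotheses on the error term: `ψ x / x` is nonincreasing and, along dyadic scales,
`ψ` grows with exponent `< 1`, which makes the dyadic error sums geometric. -/
structure IsAdmissibleError (ψ : ℕ → ℝ) (c r : ℝ) : Prop where
  nonneg : ∀ n, 0 ≤ ψ n
  antitoneOn_div : AntitoneOn (fun n : ℕ => ψ n / n) (Set.Ici 1)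
  r_nonneg : 0 ≤ r
  r_lt_one : r < 1
  div_two_pow_le : ∀ m j, ψ (2 ^ j * m) / 2 ^ j ≤ c * r ^ j * ψ m

noncomputable def dyadicError (ψ : ℕ → ℝ) (m k : ℕ) : ℝ :=
  ∑ j ∈ range (Nat.clog 2 k), ψ (2 ^ j * m) / 2 ^ j

theorem dyadicError_mono {ψ : ℕ → ℝ} (hψ : ∀ n, 0 ≤ ψ n) (m : ℕ) :
    Monotone (dyadicError ψ m) := fun _ _ hkk' =>
  sum_le_sum_of_subset_of_nonneg (range_subset_range.2 (Nat.clog_mono_right 2 hkk'))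
    fun j _ _ => div_nonneg (hψ _) (by positivity)

theorem Nat.clog_two_eq_clog_sub_half_add_one {k : ℕ} (hk : 2 ≤ k) :
    Nat.clog 2 k = Nat.clog 2 (k - k / 2) + 1 := by
  rw [Nat.clog_of_two_le one_lt_two hk]
  congr 2
  omega

theorem Nat.two_pow_clog_sub_half_le {k : ℕ} (hk : 2 ≤ k) : 2 ^ Nat.clog 2 (k - k / 2) ≤ k := by
  have := Nat.pow_pred_clog_lt_self one_lt_two hk
  rw [Nat.clog_two_eq_clog_sub_half_add_one hk] at this
  exact this.le

theorem dyadicError_eq_sub_half_add {ψ : ℕ → ℝ} (m : ℕ) {k : ℕ} (hk : 2 ≤ k) :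
    dyadicError ψ m k = dyadicError ψ m (k - k / 2) +
      ψ (2 ^ Nat.clog 2 (k - k / 2) * m) / 2 ^ Nat.clog 2 (k - k / 2) := by
  rw [dyadicError, Nat.clog_two_eq_clog_sub_half_add_one hk, sum_range_succ, dyadicError]

section QuasiSuperadditive

variable {a ψ : ℕ → ℝ}

theorem exists_mul_div_sub_le (hψ : ∀ n, 0 ≤ ψ n)
    (hsub : ∀ m n, 1 ≤ m → 1 ≤ n → a m + a n - ψ (m + n) ≤ a (m + n)) {m : ℕ} (hm : 1 ≤ m)
    {B : ℝ} (hB : ∀ k, 1 ≤ k → k * B ≤ a (k * m)) :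
    ∃ K, ∀ N, m ≤ N → N * B / m - K - ψ N ≤ a N := by
  -- write `N = q m + s` with `s < m`: the remainder costs at most `|B|` and `-a s`
  refine ⟨|B| + ∑ i ∈ range m, |a i|, fun N hmN => ?_⟩
  set q := N / m
  set s := N % m
  have hN : q * m + s = N := Nat.div_add_mod' N m
  have hq : 1 ≤ q := (Nat.one_le_div_iff hm).2 hmN
  have hs : s < m := Nat.mod_lt N hm
  have hm0 : (0 : ℝ) < m := by exact_mod_cast hm
  have hNB : N * B / m = q * B + s * B / m := by
    rw [← hN]; push_cast; field_simp
  have hsum : 0 ≤ ∑ i ∈ range m, |a i| := sum_nonneg fun i _ => abs_nonneg _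
  have hqB := hB q hq
  obtain hs0 | hs1 : s = 0 ∨ 1 ≤ s := by omega
  · have hqm : q * m = N := by omega
    rw [hqm] at hqB
    simp only [hs0, Nat.cast_zero, zero_mul, zero_div, add_zero] at hNB
    linarith [hψ N, abs_nonneg B]
  · have hsplit := hsub (q * m) s (one_le_mul hq hm) hs1
    rw [hN] at hsplit
    have hsB : s * B / m ≤ |B| := by
      rw [div_le_iff₀ hm0]
      have : (s : ℝ) ≤ m := by exact_mod_cast hs.le
      nlinarith [le_abs_self B, abs_nonneg B]
    have has : -∑ i ∈ range m, |a i| ≤ a s :=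
      (neg_le_neg (single_le_sum (fun i _ => abs_nonneg (a i)) (mem_range.2 hs))).trans
        (neg_abs_le _)
    linarith

theorem le_liminf_div (hψ : ∀ n, 0 ≤ ψ n) (hψ_div : Tendsto (fun n : ℕ => ψ n / n) atTop (𝓝 0))
    (hsub : ∀ m n, 1 ≤ m → 1 ≤ n → a m + a n - ψ (m + n) ≤ a (m + n))
    (hbdd : IsBoundedUnder (· ≤ ·) atTop fun n : ℕ => a n / n) {m : ℕ} (hm : 1 ≤ m)
    {B : ℝ} (hB : ∀ k, 1 ≤ k → k * B ≤ a (k * m)) :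
    B / m ≤ liminf (fun n : ℕ => a n / n) atTop := by
  obtain ⟨K, hK⟩ := exists_mul_div_sub_le hψ hsub hm hB
  have hu : Tendsto (fun N : ℕ => B / m - (K / N + ψ N / N)) atTop (𝓝 (B / m)) := by
    simpa using tendsto_const_nhds.sub
      ((tendsto_const_div_atTop_nhds_zero_nat K).add hψ_div)
  have hle : ∀ᶠ N : ℕ in atTop, B / m - (K / N + ψ N / N) ≤ a N / N := by
    filter_upwards [eventually_ge_atTop m] with N hN
    have hN0 : (0 : ℝ) < N := by exact_mod_cast hm.trans hN
    rw [le_div_iff₀ hN0]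
    calc (B / m - (K / N + ψ N / N)) * N = N * B / m - K - ψ N := by field_simp; ring
      _ ≤ a N := hK N hN
  rw [← hu.liminf_eq]
  exact liminf_le_liminf hle hu.isBoundedUnder_ge hbdd.isCoboundedUnder_ge

end QuasiSuperadditive

namespace IsAdmissibleError

variable {ψ : ℕ → ℝ} {c r : ℝ}

theorem tendsto_div (h : IsAdmissibleError ψ c r) :
    Tendsto (fun n : ℕ => ψ n / n) atTop (𝓝 0) := by
  refine tendsto_order.2 ⟨fun ε hε => .of_forall fun n => hε.trans_le ?_, fun ε hε => ?_⟩
  · exact div_nonneg (h.nonneg n) n.cast_nonneg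
  have hgeom : Tendsto (fun j => c * ψ 1 * r ^ j) atTop (𝓝 0) := by
    simpa using (tendsto_pow_atTop_nhds_zero_of_lt_one h.r_nonneg h.r_lt_one).const_mul
      (c * ψ 1)
  obtain ⟨j, hj⟩ := (hgeom.eventually (gt_mem_nhds hε)).exists
  filter_upwards [eventually_ge_atTop (2 ^ j)] with n hn
  calc ψ n / n ≤ ψ (2 ^ j) / (2 ^ j : ℕ) :=
        h.antitoneOn_div Nat.one_le_two_pow (Nat.one_le_two_pow.trans hn) hn
    _ ≤ c * r ^ j * ψ 1 := by simpa using h.div_two_pow_le 1 j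
    _ < ε := by linarith

theorem apply_mul_le (h : IsAdmissibleError ψ c r) {m i k : ℕ} (hm : 1 ≤ m) (hi : 1 ≤ i)
    (hik : i ≤ k) : ψ (k * m) ≤ k * (ψ (i * m) / i) := by
  have hanti := h.antitoneOn_div (Nat.one_le_iff_ne_zero.2 (by positivity) : 1 ≤ i * m)
    (Nat.mul_le_mul (hi.trans hik) hm) (Nat.mul_le_mul_right m hik)
  have hm0 : (0 : ℝ) < m := by exact_mod_cast hm
  have hk0 : (0 : ℝ) < k := by exact_mod_cast hi.trans hik
  simp only [Nat.cast_mul] at hanti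
  rw [div_le_div_iff₀ (by positivity) (by positivity)] at hanti
  rw [mul_div_assoc', le_div_iff₀ (by positivity)]
  nlinarith

theorem dyadicError_le (h : IsAdmissibleError ψ c r) (m k : ℕ) :
    dyadicError ψ m k ≤ c * ψ m / (1 - r) := by
  have hcψ : 0 ≤ c * ψ m := by
    have := h.div_two_pow_le m 0
    simp only [pow_zero, one_mul, div_one, mul_one] at this
    exact (h.nonneg m).trans this
  have hgeom := summable_geometric_of_lt_one h.r_nonneg h.r_lt_one
  calc dyadicError ψ m k ≤ ∑ j ∈ range (Nat.clog 2 k), c * ψ m * r ^ j :=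
        sum_le_sum fun j _ => (h.div_two_pow_le m j).trans_eq (by ring)
    _ = c * ψ m * ∑ j ∈ range (Nat.clog 2 k), r ^ j := by rw [mul_sum]
    _ ≤ c * ψ m * ∑' j, r ^ j := by
        gcongr
        exact hgeom.sum_le_tsum _ fun j _ => pow_nonneg h.r_nonneg j
    _ = c * ψ m / (1 - r) := by rw [tsum_geometric_of_lt_one h.r_nonneg h.r_lt_one]; ring

theorem mul_sub_dyadicError_le (h : IsAdmissibleError ψ c r) {a : ℕ → ℝ}
    (hsub : ∀ m n, 1 ≤ m → 1 ≤ n → a m + a n - ψ (m + n) ≤ a (m + n)) {m : ℕ} (hm : 1 ≤ m)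
    {k : ℕ} (hk : 1 ≤ k) : k * a m - k * dyadicError ψ m k ≤ a (k * m) := by
  induction k using Nat.strong_induction_on with
  | _ k ih =>
  obtain rfl | hk2 : k = 1 ∨ 2 ≤ k := by omega
  · simp [dyadicError]
  set p := k / 2
  set q := k - p
  set J := Nat.clog 2 q
  have hpq : p + q = k := by omega
  have hp : p * a m - p * dyadicError ψ m p ≤ a (p * m) := ih p (by omega) (by omega)
  have hq : q * a m - q * dyadicError ψ m q ≤ a (q * m) := ih q (by omega) (by omega)
  have hsplit : a (p * m) + a (q * m) - ψ (k * m) ≤ a (k * m) := by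
    simpa only [← add_mul, hpq] using hsub (p * m) (q * m) (one_le_mul (show 1 ≤ p by omega) hm)
      (one_le_mul (show 1 ≤ q by omega) hm)
  have hψk : ψ (k * m) ≤ k * (ψ (2 ^ J * m) / 2 ^ J) := by
    exact_mod_cast h.apply_mul_le hm Nat.one_le_two_pow (Nat.two_pow_clog_sub_half_le hk2)
  have hΦpq : p * dyadicError ψ m p ≤ p * dyadicError ψ m q :=
    mul_le_mul_of_nonneg_left (dyadicError_mono h.nonneg m (by omega)) p.cast_nonneg
  have hpqR : (p : ℝ) + q = k := by exact_mod_cast hpq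
  rw [dyadicError_eq_sub_half_add m hk2]
  linear_combination hp + hq + hsplit + hψk + hΦpq - (a m - dyadicError ψ m q) * hpqR

theorem mul_le_apply_mul (h : IsAdmissibleError ψ c r) {a : ℕ → ℝ}
    (hsub : ∀ m n, 1 ≤ m → 1 ≤ n → a m + a n - ψ (m + n) ≤ a (m + n)) {m : ℕ} (hm : 1 ≤ m)
    {k : ℕ} (hk : 1 ≤ k) : k * (a m - c * ψ m / (1 - r)) ≤ a (k * m) := by
  have hk0 : (0 : ℝ) ≤ k := k.cast_nonneg
  nlinarith [h.mul_sub_dyadicError_le hsub hm hk, h.dyadicError_le m k]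

theorem exists_tendsto_div {a : ℕ → ℝ} (h : IsAdmissibleError ψ c r)
    (hsub : ∀ m n, 1 ≤ m → 1 ≤ n → a m + a n - ψ (m + n) ≤ a (m + n))
    (hbdd : IsBoundedUnder (· ≤ ·) atTop fun n : ℕ => a n / n) :
    ∃ L, Tendsto (fun n : ℕ => a n / n) atTop (𝓝 L) := by
  set b := fun n : ℕ => a n / n
  set δ := fun m : ℕ => c * ψ m / (1 - r)
  have hδ : Tendsto (fun m : ℕ => δ m / m) atTop (𝓝 0) := by
    have := h.tendsto_div.const_mul (c / (1 - r))
    rw [mul_zero] at this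
    exact this.congr fun m => by simp only [δ]; ring
  have hlow : ∀ m, 1 ≤ m → b m - δ m / m ≤ liminf b atTop := fun m hm => by
    simpa only [sub_div] using le_liminf_div h.nonneg h.tendsto_div hsub hbdd hm
      fun k hk => h.mul_le_apply_mul hsub hm hk
  have hbdd' : IsBoundedUnder (· ≥ ·) atTop b := by
    refine ⟨a 1 - δ 1, eventually_map.2 ?_⟩
    filter_upwards [eventually_ge_atTop 1] with n hn
    have := h.mul_le_apply_mul hsub le_rfl hn
    rw [mul_one] at this
    exact (le_div_iff₀' (by exact_mod_cast hn)).2 this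
  have hlim : Tendsto (fun m : ℕ => liminf b atTop + δ m / m) atTop (𝓝 (liminf b atTop)) := by
    simpa using tendsto_const_nhds.add hδ
  have hlimsup : limsup b atTop ≤ liminf b atTop := by
    rw [← hlim.limsup_eq]
    refine limsup_le_limsup ?_ hbdd'.isCoboundedUnder_le hlim.isBoundedUnder_le
    filter_upwards [eventually_ge_atTop 1] with m hm
    linarith [hlow m hm]
  exact ⟨_, tendsto_of_le_liminf_of_limsup_le le_rfl hlimsup hbdd hbdd'⟩

theorem const_mul (h : IsAdmissibleError ψ c r)
    {K : ℝ} (hK : 0 ≤ K) : IsAdmissibleError (fun n => K * ψ n) c r where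
  nonneg n := mul_nonneg hK (h.nonneg n)
  antitoneOn_div m hm n hn hmn := by
    simpa only [mul_div_assoc] using mul_le_mul_of_nonneg_left (h.antitoneOn_div hm hn hmn) hK
  r_nonneg := h.r_nonneg
  r_lt_one := h.r_lt_one
  div_two_pow_le m j := by
    simpa only [mul_div_assoc, mul_left_comm K] using
      mul_le_mul_of_nonneg_left (h.div_two_pow_le m j) hK

end IsAdmissibleError

theorem Real.log_one_add_div_antitoneOn :
    AntitoneOn (fun x : ℝ => log (1 + x) / x) (Set.Ioi 0) := by
  intro x (hx : 0 < x) y (hy : 0 < y) hxy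
  have ht : 0 ≤ x / y := by positivity
  have hconc := strictConcaveOn_log_Ioi.concaveOn.2 (show 1 + y ∈ Set.Ioi 0 by simp; linarith)
    (show (1 : ℝ) ∈ Set.Ioi 0 by simp) ht (sub_nonneg.2 ((div_le_one hy).2 hxy))
    (add_sub_cancel _ _)
  have hpt : x / y * (1 + y) + (1 - x / y) * 1 = 1 + x := by field_simp; ring
  simp only [smul_eq_mul, log_one, mul_zero, add_zero, hpt] at hconc
  show log (1 + y) / y ≤ log (1 + x) / x
  rw [div_le_div_iff₀ hy hx]
  calc log (1 + y) * x = x / y * log (1 + y) * y := by field_simp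
    _ ≤ log (1 + x) * y := by gcongr

theorem Real.sqrt_mul_log_one_add_div {x : ℝ} (hx : 0 ≤ x) :
    √(x * log (1 + x)) / x = √(log (1 + x) / x) := by
  rcases hx.eq_or_lt with rfl | hx
  · simp
  rw [show log (1 + x) / x = x * log (1 + x) / x ^ 2 by field_simp,
    sqrt_div' _ (by positivity), sqrt_sq hx.le]

theorem Real.log_one_add_two_pow_mul_le {x : ℝ} (hx : 1 ≤ x) (j : ℕ) :
    log (1 + 2 ^ j * x) ≤ (1 + j) * log (1 + x) := by
  have hlog2 : log 2 ≤ log (1 + x) := log_le_log two_pos (by linarith)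
  calc log (1 + 2 ^ j * x) ≤ log (2 ^ j * (1 + x)) := by
        gcongr
        nlinarith [one_le_pow₀ (one_le_two : (1 : ℝ) ≤ 2) (n := j)]
    _ = j * log 2 + log (1 + x) := by
        rw [log_mul (by positivity) (by positivity), log_pow]
    _ ≤ (1 + j) * log (1 + x) := by nlinarith [j.cast_nonneg (α := ℝ)]

theorem isAdmissibleError_sqrt_mul_log :
    IsAdmissibleError (fun n : ℕ => √(n * log (1 + n))) 2 (√3 / 2) where
  nonneg n := sqrt_nonneg _
  antitoneOn_div m (hm : 1 ≤ m) n (hn : 1 ≤ n) hmn := by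
    show √(n * log (1 + n)) / n ≤ √(m * log (1 + m)) / m
    rw [sqrt_mul_log_one_add_div n.cast_nonneg, sqrt_mul_log_one_add_div m.cast_nonneg]
    exact sqrt_le_sqrt (log_one_add_div_antitoneOn (by simp; omega) (by simp; omega)
      (by exact_mod_cast hmn))
  r_nonneg := by positivity
  r_lt_one := by
    rw [div_lt_one two_pos, sqrt_lt' two_pos]
    norm_num
  div_two_pow_le m j := by
    show √(((2 ^ j * m : ℕ) : ℝ) * log (1 + ((2 ^ j * m : ℕ) : ℝ))) / 2 ^ j ≤
      2 * (√3 / 2) ^ j * √(m * log (1 + m))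
    push_cast
    rcases Nat.eq_zero_or_pos m with rfl | hm
    · simp
    have hm1 : (1 : ℝ) ≤ m := by exact_mod_cast hm
    have hL : 0 ≤ log (1 + (m : ℝ)) := log_nonneg (by linarith)
    have hbern : (1 + j : ℝ) ≤ 2 * (3 / 2) ^ j := by
      linarith [one_add_mul_le_pow (by norm_num : (-2 : ℝ) ≤ 1 / 2) j]
    have hrhs : (2 * (√3 / 2) ^ j * √(m * log (1 + m)) * 2 ^ j) ^ 2 =
        4 * 3 ^ j * (m * log (1 + m)) := by
      have hs : (√3 / 2) ^ j * 2 ^ j = √3 ^ j := by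
        rw [← mul_pow, div_mul_cancel₀ _ two_ne_zero]
      have h3 : (√3 ^ j) ^ 2 = 3 ^ j := by
        rw [← pow_mul, mul_comm, pow_mul, sq_sqrt (by norm_num)]
      calc _ = 2 ^ 2 * ((√3 / 2) ^ j * 2 ^ j) ^ 2 * √(m * log (1 + m)) ^ 2 := by ring
        _ = _ := by rw [hs, h3, sq_sqrt (by positivity)]; norm_num
    have h32 : (2 : ℝ) ^ j * (3 / 2) ^ j = 3 ^ j := by rw [← mul_pow]; norm_num
    rw [div_le_iff₀ (by positivity), sqrt_le_left (by positivity), hrhs]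
    calc 2 ^ j * m * log (1 + 2 ^ j * m) ≤ 2 ^ j * m * ((1 + j) * log (1 + m)) := by
          gcongr
          exact log_one_add_two_pow_mul_le hm1 j
      _ ≤ 2 ^ j * m * (2 * (3 / 2) ^ j * log (1 + m)) := by gcongr
      _ = 2 * 3 ^ j * (m * log (1 + m)) := by rw [← h32]; ring
      _ ≤ 4 * 3 ^ j * (m * log (1 + m)) := by gcongr; norm_num

theorem stmt6 (a : ℕ → ℝ)
    (hsub : ∀ m n : ℕ, 1 ≤ m → 1 ≤ n →
      a m + a n - 7 * Real.sqrt (((m:ℝ) + n) * Real.log (1 + ((m:ℝ) + n))) ≤ a (m + n))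
    (C : ℝ) (hC : ∀ n : ℕ, 1 ≤ n → a n / n ≤ C) :
    ∃ L : ℝ, Filter.Tendsto (fun n : ℕ => a n / n) Filter.atTop (nhds L) := by
  refine (isAdmissibleError_sqrt_mul_log.const_mul (K := 7) (by norm_num)).exists_tendsto_div
    (fun m n hm hn => ?_) ⟨C, eventually_map.2 ?_⟩
  · push_cast
    exact hsub m n hm hn
  · filter_upwards [eventually_ge_atTop 1] using hC
end

section
/- The function ψ(x) = 7·√(x·log(1+x)) is concave on [0, ∞). -/
/-! Both `x` and `log (1 + x)` are nonnegative and concave on `[0, ∞)`, and the geometric mean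
`√(f g)` of two nonnegative concave functions is concave by the Cauchy–Schwarz inequality. -/

open Real

lemma Real.sqrt_mul_sqrt_add_sqrt_mul_sqrt_le {p q r s : ℝ} (hp : 0 ≤ p) (hq : 0 ≤ q)
    (hr : 0 ≤ r) (hs : 0 ≤ s) : √p * √q + √r * √s ≤ √(p + r) * √(q + s) := by
  simpa [Fin.sum_univ_two] using
    sum_sqrt_mul_sqrt_le Finset.univ (f := ![p, r]) (g := ![q, s])
      (Fin.forall_fin_two.2 ⟨hp, hr⟩) (Fin.forall_fin_two.2 ⟨hq, hs⟩)

theorem ConcaveOn.sqrt_mul {E : Type*} [AddCommGroup E] [Module ℝ E] {s : Set E} {f g : E → ℝ}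
    (hf : ConcaveOn ℝ s f) (hg : ConcaveOn ℝ s g) (hf₀ : ∀ x ∈ s, 0 ≤ f x)
    (hg₀ : ∀ x ∈ s, 0 ≤ g x) : ConcaveOn ℝ s (fun x => √(f x * g x)) := by
  refine ⟨hf.1, fun x hx y hy a b ha hb hab => ?_⟩
  have hz := hf.1 hx hy ha hb hab
  have hfx := hf₀ x hx; have hfy := hf₀ y hy; have hgx := hg₀ x hx; have hgy := hg₀ y hy
  -- `c √(u v) = √(c u) √(c v)` puts the left side in the shape of two-term Cauchy–Schwarz.
  have scale {c u v : ℝ} (hc : 0 ≤ c) (hu : 0 ≤ u) : c * √(u * v) = √(c * u) * √(c * v) := by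
    rw [← Real.sqrt_mul (mul_nonneg hc hu), mul_mul_mul_comm, Real.sqrt_mul (mul_self_nonneg c),
      Real.sqrt_mul_self hc]
  calc a • √(f x * g x) + b • √(f y * g y)
      = √(a * f x) * √(a * g x) + √(b * f y) * √(b * g y) := by
        rw [smul_eq_mul, smul_eq_mul, scale ha hfx, scale hb hfy]
    _ ≤ √(a * f x + b * f y) * √(a * g x + b * g y) :=
        Real.sqrt_mul_sqrt_add_sqrt_mul_sqrt_le (by positivity) (by positivity)
          (by positivity) (by positivity)
    _ ≤ √(f (a • x + b • y)) * √(g (a • x + b • y)) := by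
        gcongr
        · simpa using hf.2 hx hy ha hb hab
        · simpa using hg.2 hx hy ha hb hab
    _ = √(f (a • x + b • y) * g (a • x + b • y)) := (Real.sqrt_mul (hf₀ _ hz) _).symm

theorem concaveOn_log_one_add : ConcaveOn ℝ (Set.Ici 0) (fun x : ℝ => log (1 + x)) :=
  (strictConcaveOn_log_Ioi.concaveOn.translate_right 1).subset
    (fun x (hx : 0 ≤ x) => show 0 < 1 + x by linarith) (convex_Ici 0)

theorem stmt7 :
    ConcaveOn ℝ (Set.Ici (0:ℝ)) (fun x => 7 * Real.sqrt (x * Real.log (1 + x))) := by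
  have h := (concaveOn_id (convex_Ici (0 : ℝ))).sqrt_mul concaveOn_log_one_add
    (fun _ hx => hx) (fun x hx => log_nonneg (by simp only [Set.mem_Ici] at hx; linarith))
  simpa only [smul_eq_mul, id] using h.smul (by norm_num : (0 : ℝ) ≤ 7)
end
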